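/- Let M = {v₁,…,v_{#M}} ⊂ ℝ^N be a finite set of vectors, 0 < δ < 1, w > √e, and let Φ be the random Gaussian map with K rows as above. If K ≥ max{ (log(#M) + log(1/δ)) / log(w/√e), 3 }, then with probability at least 1 − δ, for every v ∈ M simultaneously: w⁻¹‖v‖_Σ ≤ ‖Φv‖₂ ≤ w‖v‖_Σ. -/

import Mathlib

open MeasureTheory ProbabilityTheory Real Matrix
open scoped NNReal ENNReal

/-! For fixed `v` the coordinates `Zᵢ ⬝ᵥ v` are independent `N(0, V)` with `V = vᵀΣv`, so
`Q = ∑ᵢ (Zᵢ ⬝ᵥ v)²` is `V` times a `χ²(K)` variable, with moment generating function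
`(1 - 2tV)^{-K/2}`. Chernoff's bound at the optimal `t` gives both tails
`P(Q ≥ KVs) ≤ (s e^{1-s})^{K/2}` for `s ≥ 1` and `P(Q ≤ KVs) ≤ (s e^{1-s})^{K/2}` for
`s ≤ 1`.
At `s = w^{±2}` both terms carry the factor `(√e/w)^K`, and what remains sums to at most `1`
once `w² ≥ e` and `K ≥ 3`. A union bound over `M` and the choice of `K` conclude. -/

section GaussianSquare

variable {V : ℝ≥0} {t : ℝ}

lemma gaussianPDFReal_zero_mul_exp_mul_sq (hV : V ≠ 0) (x : ℝ) :
    gaussianPDFReal 0 V x * exp (t * x ^ 2)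
      = (√(2 * π * V))⁻¹ * exp (-((1 - 2 * t * V) / (2 * V)) * x ^ 2) := by
  rw [gaussianPDFReal, mul_assoc, ← exp_add]
  congr 2
  field_simp
  ring

lemma integrable_exp_mul_sq_gaussianReal (ht : 2 * t * V < 1) :
    Integrable (fun x => exp (t * x ^ 2)) (gaussianReal 0 V) := by
  rcases eq_or_ne V 0 with rfl | hV
  · rw [gaussianReal_zero_var]
    exact integrable_dirac enorm_lt_top
  have hV' : (0 : ℝ) < V := by positivity
  rw [gaussianReal_of_var_ne_zero _ hV, integrable_withDensity_iff_integrable_smul'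
    (measurable_gaussianPDF _ _) (ae_of_all _ fun _ => gaussianPDF_lt_top)]
  simp_rw [toReal_gaussianPDF, smul_eq_mul, gaussianPDFReal_zero_mul_exp_mul_sq hV]
  exact (integrable_exp_neg_mul_sq (div_pos (by linarith) (by positivity))).const_mul _

lemma integral_exp_mul_sq_gaussianReal (ht : 2 * t * V < 1) :
    ∫ x, exp (t * x ^ 2) ∂gaussianReal 0 V = (√(1 - 2 * t * V))⁻¹ := by
  rcases eq_or_ne V 0 with rfl | hV
  · simp [gaussianReal_zero_var]
  have hV' : (0 : ℝ) < V := by positivity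
  have hb : 0 < 1 - 2 * t * V := by linarith
  simp_rw [integral_gaussianReal_eq_integral_smul hV, smul_eq_mul,
    gaussianPDFReal_zero_mul_exp_mul_sq hV, integral_const_mul, integral_gaussian,
    ← sqrt_inv]
  rw [← sqrt_mul (by positivity)]
  congr 1
  field_simp

end GaussianSquare

section SumOfSquares

variable {Ω ι : Type*} [MeasurableSpace Ω] {P : Measure Ω} {X : ι → Ω → ℝ} {V : ℝ≥0}
  {t : ℝ}

lemma ProbabilityTheory.iIndepFun.sq (hind : iIndepFun X P) :
    iIndepFun (fun i ω => X i ω ^ 2) P :=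
  hind.comp _ fun _ => measurable_id.pow_const 2

lemma integrable_exp_mul_sq_of_map_eq_gaussianReal {Y : Ω → ℝ} (hY : Measurable Y)
    (hlaw : P.map Y = gaussianReal 0 V) (ht : 2 * t * V < 1) :
    Integrable (fun ω => exp (t * Y ω ^ 2)) P := by
  have := hlaw ▸ integrable_exp_mul_sq_gaussianReal ht
  exact (integrable_map_measure this.aestronglyMeasurable hY.aemeasurable).1 this

lemma two_mul_sub_inv_div_mul_lt_one (hV : V ≠ 0) {s : ℝ} (hs : 0 < s) :
    2 * ((1 - s⁻¹) / (2 * V)) * V < 1 := by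
  have hV' : (V : ℝ) ≠ 0 := by positivity
  field_simp
  linarith [inv_pos.2 hs]

variable [Fintype ι]

lemma mgf_sum_sq (hX : ∀ i, Measurable (X i)) (hind : iIndepFun X P)
    (hlaw : ∀ i, P.map (X i) = gaussianReal 0 V) (ht : 2 * t * V < 1) :
    mgf (fun ω => ∑ i, X i ω ^ 2) P t = (√(1 - 2 * t * V))⁻¹ ^ Fintype.card ι := by
  have h := hind.sq.mgf_sum (t := t) (fun i => (hX i).pow_const 2) Finset.univ
  simp only [Finset.sum_fn] at h
  rw [h, Finset.prod_eq_pow_card fun i _ => ?_, Finset.card_univ]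
  have := hlaw i ▸ integrable_exp_mul_sq_gaussianReal ht
  rw [mgf, ← integral_map (hX i).aemeasurable this.aestronglyMeasurable, hlaw i,
    integral_exp_mul_sq_gaussianReal ht]

lemma exp_mul_mgf_sum_sq_eq (hX : ∀ i, Measurable (X i)) (hind : iIndepFun X P)
    (hlaw : ∀ i, P.map (X i) = gaussianReal 0 V) (hV : V ≠ 0) {s : ℝ} (hs : 0 < s) :
    exp (-((1 - s⁻¹) / (2 * V)) * (Fintype.card ι * V * s))
        * mgf (fun ω => ∑ i, X i ω ^ 2) P ((1 - s⁻¹) / (2 * V))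
      = √(s * exp (1 - s)) ^ Fintype.card ι := by
  have hV' : (V : ℝ) ≠ 0 := by positivity
  -- `t = (1 - s⁻¹) / (2V)` minimises `exp (-t KVs) (1 - 2tV)^{-K/2}`
  have h2tV : 2 * ((1 - s⁻¹) / (2 * V)) * V = 1 - s⁻¹ := by field_simp
  rw [mgf_sum_sq hX hind hlaw (two_mul_sub_inv_div_mul_lt_one hV hs), h2tV, sub_sub_cancel,
    sqrt_inv, inv_inv, sqrt_mul hs.le, ← exp_half, mul_pow, ← exp_nat_mul, mul_comm]
  congr 2
  field_simp
  ring

variable [IsProbabilityMeasure P]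

lemma integrable_exp_mul_sum_sq (hX : ∀ i, Measurable (X i)) (hind : iIndepFun X P)
    (hlaw : ∀ i, P.map (X i) = gaussianReal 0 V) (ht : 2 * t * V < 1) :
    Integrable (fun ω => exp (t * ∑ i, X i ω ^ 2)) P := by
  simpa only [Finset.sum_apply] using hind.sq.integrable_exp_mul_sum (s := Finset.univ)
    (fun i => (hX i).pow_const 2)
    fun i _ => integrable_exp_mul_sq_of_map_eq_gaussianReal (hX i) (hlaw i) ht

lemma measureReal_sum_sq_ge_le (hX : ∀ i, Measurable (X i)) (hind : iIndepFun X P)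
    (hlaw : ∀ i, P.map (X i) = gaussianReal 0 V) (hV : V ≠ 0) {s : ℝ} (hs : 1 ≤ s) :
    P.real {ω | Fintype.card ι * V * s ≤ ∑ i, X i ω ^ 2}
      ≤ √(s * exp (1 - s)) ^ Fintype.card ι :=
  (measure_ge_le_exp_mul_mgf _
    (div_nonneg (sub_nonneg.2 (inv_le_one_of_one_le₀ hs)) (by positivity))
    (integrable_exp_mul_sum_sq hX hind hlaw
      (two_mul_sub_inv_div_mul_lt_one hV (by linarith)))).trans_eq
    (exp_mul_mgf_sum_sq_eq hX hind hlaw hV (by linarith))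

lemma measureReal_sum_sq_le_le (hX : ∀ i, Measurable (X i)) (hind : iIndepFun X P)
    (hlaw : ∀ i, P.map (X i) = gaussianReal 0 V) (hV : V ≠ 0) {s : ℝ} (hs0 : 0 < s)
    (hs : s ≤ 1) :
    P.real {ω | ∑ i, X i ω ^ 2 ≤ Fintype.card ι * V * s}
      ≤ √(s * exp (1 - s)) ^ Fintype.card ι :=
  (measure_le_le_exp_mul_mgf _
    (div_nonpos_of_nonpos_of_nonneg (sub_nonpos.2 ((one_le_inv₀ hs0).2 hs)) (by positivity))
    (integrable_exp_mul_sum_sq hX hind hlaw (two_mul_sub_inv_div_mul_lt_one hV hs0))).trans_eq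
    (exp_mul_mgf_sum_sq_eq hX hind hlaw hV hs0)

end SumOfSquares

lemma self_le_exp_half {u : ℝ} (hu : 0 ≤ u) : u ≤ exp (u / 2) := by
  have h := sum_le_exp_of_nonneg (by positivity : 0 ≤ u / 2) 3
  norm_num [Finset.sum_range_succ, Nat.factorial] at h
  nlinarith [sq_nonneg (u - 4)]

-- Equivalent to `u³ e^{-3u/2} ≤ 3 / (2u + 3)`; at `u = e` the two sides are about `0.340`
-- and `0.356`, hence the degree-10 Taylor polynomial and the precise lower bound for `e`.
lemma two_mul_pow_four_add_three_mul_pow_three_le {u : ℝ} (hu : 2.7182818 ≤ u) :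
    2 * u ^ 4 + 3 * u ^ 3 ≤ 3 * exp (3 * u / 2) := by
  have h := sum_le_exp_of_nonneg (by linarith : 0 ≤ 3 * u / 2) 10
  norm_num [Finset.sum_range_succ, Nat.factorial] at h
  have hs : 0 ≤ u - 2.7182818 := by linarith
  nlinarith [pow_nonneg hs 2, pow_nonneg hs 3, pow_nonneg hs 4, pow_nonneg hs 5,
    pow_nonneg hs 6, pow_nonneg hs 7, pow_nonneg hs 8, pow_nonneg hs 9, h]

lemma mul_exp_neg_half_pow_three_add_le_one {u : ℝ} (hu : exp 1 ≤ u) :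
    (u * exp (-u / 2)) ^ 3 + exp (-u⁻¹ / 2) ^ 3 ≤ 1 := by
  have hu' : 2.7182818 ≤ u := by linarith [exp_one_gt_d9]
  have hu0 : 0 < u := by linarith
  rw [mul_pow, ← exp_nat_mul, ← exp_nat_mul]
  have ha : u ^ 3 * exp (3 * (-u / 2)) ≤ 3 / (2 * u + 3) := by
    rw [show 3 * (-u / 2) = -(3 * u / 2) by ring, exp_neg, ← div_eq_mul_inv,
      div_le_div_iff₀ (exp_pos _) (by positivity)]
    nlinarith [two_mul_pow_four_add_three_mul_pow_three_le hu']
  have hb : exp (3 * (-u⁻¹ / 2)) ≤ 2 * u / (2 * u + 3) := by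
    rw [show 3 * (-u⁻¹ / 2) = -(3 / (2 * u)) by ring, exp_neg,
      inv_le_comm₀ (exp_pos _) (by positivity), inv_div]
    calc (2 * u + 3) / (2 * u) = 3 / (2 * u) + 1 := by field_simp; ring
      _ ≤ exp (3 / (2 * u)) := add_one_le_exp _
  calc _ ≤ 3 / (2 * u + 3) + 2 * u / (2 * u + 3) := add_le_add ha hb
    _ = 1 := by field_simp; ring

lemma pow_add_pow_le_one {a b : ℝ} (ha0 : 0 ≤ a) (ha1 : a ≤ 1) (hb0 : 0 ≤ b) (hb1 : b ≤ 1)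
    (hab : a ^ 3 + b ^ 3 ≤ 1) {n : ℕ} (hn : 3 ≤ n) : a ^ n + b ^ n ≤ 1 :=
  (add_le_add (pow_le_pow_of_le_one ha0 ha1 hn) (pow_le_pow_of_le_one hb0 hb1 hn)).trans hab

lemma sqrt_mul_exp_one_sub_eq {u x : ℝ} (hu : 0 < u) (hx : 0 ≤ x) :
    √(x * exp (1 - x)) = √(exp 1 / u) * √(u * x) * exp (-x / 2) := by
  rw [exp_half, ← sqrt_mul (by positivity), ← sqrt_mul (by positivity)]
  congr 1
  rw [exp_sub, exp_neg]
  field_simp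

lemma sqrt_mul_exp_one_sub_pow_add_le {u : ℝ} (hu : exp 1 ≤ u) {n : ℕ} (hn : 3 ≤ n) :
    √(u * exp (1 - u)) ^ n + √(u⁻¹ * exp (1 - u⁻¹)) ^ n ≤ √(exp 1 / u) ^ n := by
  have hu0 : 0 < u := (exp_pos 1).trans_le hu
  rw [sqrt_mul_exp_one_sub_eq hu0 hu0.le, sqrt_mul_exp_one_sub_eq hu0 (inv_nonneg.2 hu0.le),
    sqrt_mul_self hu0.le, mul_inv_cancel₀ hu0.ne', sqrt_one, mul_one, mul_assoc,
    mul_pow (√(exp 1 / u)), mul_pow (√(exp 1 / u)), ← mul_add]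
  refine mul_le_of_le_one_right (by positivity) (pow_add_pow_le_one (by positivity) ?_
    (by positivity) ?_ (mul_exp_neg_half_pow_three_add_le_one hu) hn)
  · rw [neg_div, exp_neg, ← div_eq_mul_inv, div_le_one (exp_pos _)]
    exact self_le_exp_half hu0.le
  · exact exp_le_one_iff.2 (by simp only [neg_div, neg_nonpos]; positivity)


section Deviation

variable {Ω ι : Type*} [MeasurableSpace Ω] {P : Measure Ω} {X : ι → Ω → ℝ} {V : ℝ≥0}

lemma ae_eq_zero_of_map_eq_gaussianReal_zero {Y : Ω → ℝ} (hY : AEMeasurable Y P)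
    (hlaw : P.map Y = gaussianReal 0 0) : ∀ᵐ ω ∂P, Y ω = 0 :=
  ae_of_ae_map hY (p := (· = 0)) <| by
    rw [hlaw, gaussianReal_zero_var, ae_dirac_eq]
    exact Filter.eventually_pure.2 rfl

variable [IsProbabilityMeasure P] [Fintype ι]

theorem measure_sqrt_mean_sq_notMem_Icc_le (hX : ∀ i, Measurable (X i)) (hind : iIndepFun X P)
    (hlaw : ∀ i, P.map (X i) = gaussianReal 0 V) {w : ℝ} (hw : √(exp 1) < w)
    (hn : 3 ≤ Fintype.card ι) :
    P {ω | √(1 / Fintype.card ι * ∑ i, X i ω ^ 2) ∉ Set.Icc (w⁻¹ * √V) (w * √V)}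
      ≤ ENNReal.ofReal ((√(exp 1) / w) ^ Fintype.card ι) := by
  set n := Fintype.card ι
  rcases eq_or_ne V 0 with rfl | hV
  · refine (measure_eq_zero_iff_ae_notMem.2 ?_).trans_le bot_le
    filter_upwards [ae_all_iff.2 fun i => ae_eq_zero_of_map_eq_gaussianReal_zero
      (hX i).aemeasurable (hlaw i)] with ω hω
    simp [hω]
  have hw0 : 0 < w := (sqrt_nonneg _).trans_lt hw
  have hn0 : (0 : ℝ) < n := by positivity
  have hu : exp 1 ≤ w ^ 2 := by
    have := pow_le_pow_left₀ (sqrt_nonneg _) hw.le 2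
    rwa [sq_sqrt (exp_pos 1).le] at this
  have hu1 : 1 ≤ w ^ 2 := by linarith [add_one_le_exp (1 : ℝ)]
  have hsub : {ω | √(1 / n * ∑ i, X i ω ^ 2) ∉ Set.Icc (w⁻¹ * √V) (w * √V)}
      ⊆ {ω | ∑ i, X i ω ^ 2 ≤ n * V * (w ^ 2)⁻¹}
        ∪ {ω | n * V * w ^ 2 ≤ ∑ i, X i ω ^ 2} := by
    intro ω hω
    by_contra! h
    simp only [Set.mem_union, Set.mem_ofPred_eq, not_or, not_le] at h
    refine hω ⟨le_sqrt_of_sq_le ?_, sqrt_le_iff.2 ⟨by positivity, ?_⟩⟩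
    · calc (w⁻¹ * √V) ^ 2 = 1 / n * (n * V * (w ^ 2)⁻¹) := by
            rw [mul_pow, sq_sqrt V.coe_nonneg]; field_simp
        _ ≤ 1 / n * ∑ i, X i ω ^ 2 := by gcongr; exact h.1.le
    · calc 1 / n * ∑ i, X i ω ^ 2 ≤ 1 / n * (n * V * w ^ 2) := by gcongr; exact h.2.le
        _ = (w * √V) ^ 2 := by rw [mul_pow, sq_sqrt V.coe_nonneg]; field_simp
  calc _ ≤ P {ω | ∑ i, X i ω ^ 2 ≤ n * V * (w ^ 2)⁻¹}
          + P {ω | n * V * w ^ 2 ≤ ∑ i, X i ω ^ 2} :=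
        (measure_mono hsub).trans (measure_union_le _ _)
    _ = ENNReal.ofReal (P.real {ω | ∑ i, X i ω ^ 2 ≤ n * V * (w ^ 2)⁻¹}
          + P.real {ω | n * V * w ^ 2 ≤ ∑ i, X i ω ^ 2}) := by
        rw [ENNReal.ofReal_add measureReal_nonneg measureReal_nonneg, ofReal_measureReal,
          ofReal_measureReal]
    _ ≤ ENNReal.ofReal (√((w ^ 2)⁻¹ * exp (1 - (w ^ 2)⁻¹)) ^ n
          + √(w ^ 2 * exp (1 - w ^ 2)) ^ n) := by
        gcongr
        · exact measureReal_sum_sq_le_le hX hind hlaw hV (by positivity)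
            (inv_le_one_of_one_le₀ hu1)
        · exact measureReal_sum_sq_ge_le hX hind hlaw hV hu1
    _ ≤ ENNReal.ofReal ((√(exp 1) / w) ^ n) := by
        rw [add_comm]
        refine ENNReal.ofReal_le_ofReal ((sqrt_mul_exp_one_sub_pow_add_le hu hn).trans_eq ?_)
        rw [sqrt_div' _ (sq_nonneg w), sqrt_sq hw0.le]

end Deviation

lemma Real.sqrt_coe_toNNReal (x : ℝ) : √(x.toNNReal : ℝ) = √x := by
  rcases le_total 0 x with h | h
  · rw [Real.coe_toNNReal _ h]
  · rw [Real.toNNReal_of_nonpos h, sqrt_eq_zero_of_nonpos h, NNReal.coe_zero, sqrt_zero]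

lemma card_mul_inv_pow_le {n K : ℕ} {r δ : ℝ} (hr : 1 < r) (hδ : 0 < δ)
    (hK : (log n + log δ⁻¹) / log r ≤ K) : n * r⁻¹ ^ K ≤ δ := by
  rcases Nat.eq_zero_or_pos n with rfl | hn
  · simpa using hδ.le
  have hr0 : 0 < r := one_pos.trans hr
  rw [div_le_iff₀ (log_pos hr), log_inv] at hK
  rw [← log_le_log_iff (by positivity) hδ, log_mul (by positivity) (by positivity), log_pow,
    log_inv]
  linarith

lemma ofReal_one_sub_card_mul_le_measure_forall {Ω α : Type*} [MeasurableSpace Ω]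
    {P : Measure Ω} [IsProbabilityMeasure P] (s : Finset α) (E : α → Ω → Prop) {p : ℝ}
    (hp : 0 ≤ p) (hE : ∀ a ∈ s, P {ω | ¬ E a ω} ≤ ENNReal.ofReal p) :
    ENNReal.ofReal (1 - s.card * p) ≤ P {ω | ∀ a ∈ s, E a ω} := by
  have hcompl : P {ω | ∀ a ∈ s, E a ω}ᶜ ≤ ENNReal.ofReal (s.card * p) :=
    calc P {ω | ∀ a ∈ s, E a ω}ᶜ = P (⋃ a ∈ s, {ω | ¬ E a ω}) := by
          congr 1; ext; simp
      _ ≤ ∑ a ∈ s, P {ω | ¬ E a ω} := measure_biUnion_finset_le s _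
      _ ≤ ∑ a ∈ s, ENNReal.ofReal p := Finset.sum_le_sum hE
      _ = ENNReal.ofReal (s.card * p) := by
          rw [Finset.sum_const, nsmul_eq_mul, ENNReal.ofReal_mul (Nat.cast_nonneg _),
            ENNReal.ofReal_natCast]
  calc ENNReal.ofReal (1 - s.card * p) = 1 - ENNReal.ofReal (s.card * p) := by
        rw [ENNReal.ofReal_sub _ (by positivity), ENNReal.ofReal_one]
    _ ≤ 1 - P {ω | ∀ a ∈ s, E a ω}ᶜ := tsub_le_tsub_left hcompl 1
    _ ≤ P {ω | ∀ a ∈ s, E a ω} := by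
        rw [tsub_le_iff_right, ← measure_univ (μ := P)]
        exact measure_univ_le_add_compl _

theorem stmt4_general {Ω : Type*} [MeasurableSpace Ω] (Pr : Measure Ω) [IsProbabilityMeasure Pr]
    (N K : ℕ)
    (S : Matrix (Fin N) (Fin N) ℝ)
    (Z : Fin K → Ω → (Fin N → ℝ))
    (hmeas : ∀ i, Measurable (Z i))
    (hindep : iIndepFun Z Pr)
    (hgauss : ∀ i (a : Fin N → ℝ),
      Measure.map (fun ω => Z i ω ⬝ᵥ a) Pr
        = gaussianReal 0 (Real.toNNReal (a ⬝ᵥ S.mulVec a)))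
    (M : Finset (Fin N → ℝ))
    (δ : ℝ) (hδ0 : 0 < δ)
    (w : ℝ) (hw : Real.sqrt (Real.exp 1) < w)
    (hK : (Real.log (M.card) + Real.log δ⁻¹) / Real.log (w / Real.sqrt (Real.exp 1))
            ≤ (K : ℝ))
    (hK3 : 3 ≤ K) :
    ENNReal.ofReal (1 - δ) ≤
      Pr {ω | ∀ v ∈ M,
        w⁻¹ * Real.sqrt (v ⬝ᵥ S.mulVec v)
            ≤ Real.sqrt ((1 / (K : ℝ)) * ∑ i, (Z i ω ⬝ᵥ v) ^ 2)
          ∧ Real.sqrt ((1 / (K : ℝ)) * ∑ i, (Z i ω ⬝ᵥ v) ^ 2)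
            ≤ w * Real.sqrt (v ⬝ᵥ S.mulVec v)} := by
  have hbad : ∀ v ∈ M, Pr {ω | √(1 / K * ∑ i, (Z i ω ⬝ᵥ v) ^ 2)
      ∉ Set.Icc (w⁻¹ * √(v ⬝ᵥ S *ᵥ v)) (w * √(v ⬝ᵥ S *ᵥ v))}
        ≤ ENNReal.ofReal ((√(exp 1) / w) ^ K) := fun v _ => by
    simpa only [Fintype.card_fin, Real.sqrt_coe_toNNReal] using
      measure_sqrt_mean_sq_notMem_Icc_le (X := fun i ω => Z i ω ⬝ᵥ v) (fun i => by fun_prop)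
        (hindep.comp (fun _ z => z ⬝ᵥ v) fun _ => by fun_prop) (fun i => hgauss i v) hw
        (by simpa using hK3)
  have hδ : (M.card : ℝ) * (√(exp 1) / w) ^ K ≤ δ := by
    simpa only [inv_div] using
      card_mul_inv_pow_le ((one_lt_div (sqrt_pos.2 (exp_pos 1))).2 hw) hδ0 hK
  calc ENNReal.ofReal (1 - δ) ≤ ENNReal.ofReal (1 - M.card * (√(exp 1) / w) ^ K) := by
        gcongr
    _ ≤ _ := ofReal_one_sub_card_mul_le_measure_forall M _
      (pow_nonneg (div_nonneg (sqrt_nonneg _) ((sqrt_nonneg _).trans hw.le)) K) hbad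

/-- Simultaneous norm estimation over a finite set of vectors: if
K ≥ max{(log #M + log(1/δ))/log(w/√e), 3}, then with probability ≥ 1 − δ,
w⁻¹‖v‖_Σ ≤ ‖Φv‖₂ ≤ w‖v‖_Σ for every v in the finite set M simultaneously. -/
theorem stmt4 {Ω : Type*} [MeasurableSpace Ω] (Pr : Measure Ω) [IsProbabilityMeasure Pr]
    (N K : ℕ)
    (S : Matrix (Fin N) (Fin N) ℝ) (hS : S.PosSemidef)
    (Z : Fin K → Ω → (Fin N → ℝ))
    (hmeas : ∀ i, Measurable (Z i))
    (hindep : iIndepFun Z Pr)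
    (hgauss : ∀ i (a : Fin N → ℝ),
      Measure.map (fun ω => Z i ω ⬝ᵥ a) Pr
        = gaussianReal 0 (Real.toNNReal (a ⬝ᵥ S.mulVec a)))
    (M : Finset (Fin N → ℝ)) (hM : M.Nonempty)
    (δ : ℝ) (hδ0 : 0 < δ) (hδ1 : δ < 1)
    (w : ℝ) (hw : Real.sqrt (Real.exp 1) < w)
    (hK : (Real.log (M.card) + Real.log δ⁻¹) / Real.log (w / Real.sqrt (Real.exp 1))
            ≤ (K : ℝ))
    (hK3 : 3 ≤ K) :
    ENNReal.ofReal (1 - δ) ≤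
      Pr {ω | ∀ v ∈ M,
        w⁻¹ * Real.sqrt (v ⬝ᵥ S.mulVec v)
            ≤ Real.sqrt ((1 / (K : ℝ)) * ∑ i, (Z i ω ⬝ᵥ v) ^ 2)
          ∧ Real.sqrt ((1 / (K : ℝ)) * ∑ i, (Z i ω ⬝ᵥ v) ^ 2)
            ≤ w * Real.sqrt (v ⬝ᵥ S.mulVec v)} :=
  stmt4_general Pr N K S Z hmeas hindep hgauss M δ hδ0 w hw hK hK3
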